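/- Let w be a word of length t over Σ, and for 0 ≤ i < k let w↾_{i mod k} be the subword of letters at positions ≡ i (mod k). Then w lies in (⋃_{a∈Σ} {a^k})^* if and only if k divides t and w↾_{0 mod k} = w↾_{1 mod k} = ... = w↾_{(k−1) mod k}. -/

import Mathlib

/-!
A word of `(⋃_a {a^k})^*` is a concatenation `a₀^k a₁^k ⋯`. Splitting off a prefix whose length
is a multiple of `k` does not change residues mod `k`, and inside one block of length `k` the
`i`-th restriction is just the `i`-th letter; hence every restriction of `a₀^k a₁^k ⋯` equals
`a₀ a₁ ⋯`. Conversely, if all restrictions agree, the first `k` letters coincide, and induction on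
`|w| / k` rebuilds `w` block by block from `w↾_{0 mod k}`.
-/

/-- The `(i mod k)`-restriction of a word: letters at positions ≡ i (mod k). -/
def restrict {α : Type*} (k i : ℕ) (w : List α) : List α :=
  ((w.zipIdx.map Prod.swap).filter fun p => p.1 % k = i).map Prod.snd

/-- Kleene star of a set of words. -/
def star {α : Type*} (S : Set (List α)) : Set (List α) :=
  {w | ∃ l : List (List α), (∀ u ∈ l, u ∈ S) ∧ l.flatten = w}

section Restrict

variable {α : Type*} {k i : ℕ}

theorem restrict_append_of_dvd {u : List α} (hu : k ∣ u.length) (v : List α) :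
    restrict k i (u ++ v) = restrict k i u ++ restrict k i v := by
  have hshift (j : ℕ) : (u.length + j) % k = j % k := by
    rw [Nat.add_mod, Nat.mod_eq_zero_of_dvd hu, zero_add, Nat.mod_mod]
  simp only [restrict, List.zipIdx_append, List.map_append, List.filter_append,
    List.append_right_inj]
  rw [List.zipIdx_eq_map_add (l := v)]
  simp only [List.map_map, List.filter_map]
  simp [Function.comp_def, hshift]

theorem restrict_append_singleton (u : List α) (a : α) :
    restrict k i (u ++ [a]) = restrict k i u ++ if u.length % k = i then [a] else [] := by
  simp only [restrict, List.zipIdx_append, List.map_append, List.filter_append,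
    List.append_right_inj]
  split_ifs <;> simp [*]

theorem restrict_of_length_le {u : List α} (hu : u.length ≤ k) :
    restrict k i u = u[i]?.toList := by
  induction u using List.reverseRecOn with
  | nil => rfl
  | append_singleton u a ih =>
    simp only [List.length_append, List.length_singleton] at hu
    rw [restrict_append_singleton, ih (by omega), Nat.mod_eq_of_lt (by omega),
      List.getElem?_append]
    rcases lt_trichotomy i u.length with h | rfl | h
    · simp [h, h.ne']
    · simp
    · simp [h.ne, h.not_gt, Nat.sub_ne_zero_of_lt h]

theorem restrict_append_of_length_eq {u : List α} (hu : u.length = k) (hi : i < k)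
    (v : List α) : restrict k i (u ++ v) = u[i] :: restrict k i v := by
  rw [restrict_append_of_dvd (hu ▸ dvd_rfl), restrict_of_length_le hu.le,
    List.getElem?_eq_getElem]
  rfl

theorem restrict_flatMap_replicate (hi : i < k) (as : List α) :
    restrict k i (as.flatMap (List.replicate k)) = as := by
  induction as with
  | nil => rfl
  | cons a as ih =>
    rw [List.flatMap_cons, restrict_append_of_length_eq List.length_replicate hi, ih,
      List.getElem_replicate]

theorem flatMap_replicate_restrict_zero {w : List α} (hw : k ∣ w.length)
    (h : ∀ i < k, restrict k i w = restrict k 0 w) :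
    (restrict k 0 w).flatMap (List.replicate k) = w := by
  obtain ⟨n, hn⟩ := hw
  induction n generalizing w with
  | zero => obtain rfl : w = [] := List.eq_nil_of_length_eq_zero hn; rfl
  | succ n ih =>
    rcases k.eq_zero_or_pos with rfl | hk
    · obtain rfl : w = [] := List.eq_nil_of_length_eq_zero (by simpa using hn); rfl
    have hu : (w.take k).length = k :=
      List.length_take_of_le (hn ▸ Nat.le_mul_of_pos_right k n.succ_pos)
    have hv : (w.drop k).length = k * n := by
      rw [List.length_drop, hn, Nat.mul_succ, Nat.add_sub_cancel]
    have hblock (i) (hi : i < k) :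
        restrict k i w = (w.take k)[i] :: restrict k i (w.drop k) := by
      rw [← restrict_append_of_length_eq hu hi, List.take_append_drop]
    have hconst (i) (hi : i < k) :
        (w.take k)[i] = (w.take k)[0] ∧ restrict k i (w.drop k) = restrict k 0 (w.drop k) := by
      simpa [hblock i hi, hblock 0 hk] using h i hi
    have htake : w.take k = List.replicate k (w.take k)[0] := by
      refine List.eq_replicate_iff.mpr ⟨hu, fun b hb => ?_⟩
      obtain ⟨i, hi, rfl⟩ := List.getElem_of_mem hb
      exact (hconst i (hu ▸ hi)).1
    rw [hblock 0 hk, List.flatMap_cons, ih (fun i hi => (hconst i hi).2) hv, ← htake,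
      List.take_append_drop]

end Restrict

theorem mem_star_range_iff {α β : Type*} (f : β → List α) (w : List α) :
    w ∈ star (Set.range f) ↔ ∃ bs : List β, bs.flatMap f = w := by
  constructor
  · rintro ⟨l, hl, rfl⟩
    obtain ⟨bs, rfl⟩ : l ∈ Set.range (List.map f) := Set.range_list_map f ▸ hl
    exact ⟨bs, List.flatMap_def⟩
  · rintro ⟨bs, rfl⟩
    exact ⟨bs.map f, by simp, List.flatMap_def.symm⟩

theorem mem_star_replicate_iff_general {α : Type*} (k : ℕ) (w : List α) :
    w ∈ star {v | ∃ a : α, v = List.replicate k a} ↔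
      k ∣ w.length ∧ ∀ i : ℕ, i < k → restrict k i w = restrict k 0 w := by
  have hS : {v | ∃ a : α, v = List.replicate k a} = Set.range (List.replicate k) := by
    ext; simp [eq_comm]
  rw [hS, mem_star_range_iff]
  constructor
  · rintro ⟨as, rfl⟩
    refine ⟨by simp, fun i hi => ?_⟩
    rw [restrict_flatMap_replicate hi, restrict_flatMap_replicate (i.zero_le.trans_lt hi)]
  · rintro ⟨hw, h⟩
    exact ⟨_, flatMap_replicate_restrict_zero hw h⟩

/-- A word `w` lies in `(⋃_{a∈Σ} {a^k})^*` iff `k` divides `|w|` and all of the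
restrictions `w↾_{0 mod k}, …, w↾_{(k-1) mod k}` coincide. -/
theorem mem_star_replicate_iff {α : Type*} (k : ℕ) (hk : 0 < k) (w : List α) :
    w ∈ star {v | ∃ a : α, v = List.replicate k a} ↔
      k ∣ w.length ∧ ∀ i : ℕ, i < k → restrict k i w = restrict k 0 w :=
  mem_star_replicate_iff_general k w
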